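/- arXiv:2401.07082 — 7 statements merged into one kernel-verified Lean document; each statement's English description precedes it below -/
import Mathlib

section
/- Let V be a commutative artinian local ring with maximal ideal m satisfying m^(m0+1) = 0, of residue characteristic p, and let R be a V-algebra with a ring endomorphism F : R → R that induces the Frobenius on R/mR. Then for every integer e ≥ 0 and every g ∈ R, one has F^e(g^(p^m0)) = g^(p^(m0+e)). -/
/-!
Write `M = mR`. Iterating the Frobenius congruence gives `F^e g ≡ g^(p^e) mod M`. Since `p ∈ M`,
raising a congruence mod `M^k` (`k ≥ 1`) to the `p`-th power improves it to one mod `M^(k+1)`: in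
`a^p - b^p = (a - b) · ∑ a^i b^(p-1-i)` the sum is `≡ p b^(p-1) ≡ 0 mod M`. Hence
`(F^e g)^(p^m0) ≡ g^(p^(e+m0)) mod M^(m0+1) = 0`, and `F^e` commutes with powers.
-/

open Finset

section PowSubPow

variable {R : Type*} [CommRing R] {I : Ideal R} {n : ℕ} {a b : R}

lemma geom_sum₂_mem_of_sub_mem (hn : (n : R) ∈ I) (h : a - b ∈ I) :
    ∑ i ∈ range n, a ^ i * b ^ (n - 1 - i) ∈ I := by
  have hab : Ideal.Quotient.mk I a = Ideal.Quotient.mk I b := Ideal.Quotient.eq.mpr h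
  rw [← Ideal.Quotient.eq_zero_iff_mem, map_natCast] at hn
  rw [← Ideal.Quotient.eq_zero_iff_mem]
  simp only [map_sum, map_mul, map_pow, hab, geom_sum₂_self, hn, zero_mul]

lemma pow_sub_pow_mem_pow_succ {k : ℕ} (hn : (n : R) ∈ I) (h : a - b ∈ I ^ (k + 1)) :
    a ^ n - b ^ n ∈ I ^ (k + 2) := by
  rw [← geom_sum₂_mul, mul_comm, pow_succ]
  exact Ideal.mul_mem_mul h
    (geom_sum₂_mem_of_sub_mem hn (Ideal.pow_le_self k.succ_ne_zero h))

lemma pow_pow_sub_pow_pow_mem_pow (hn : (n : R) ∈ I) (h : a - b ∈ I) (j : ℕ) :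
    a ^ n ^ j - b ^ n ^ j ∈ I ^ (j + 1) := by
  induction j with
  | zero => simpa using h
  | succ j ih => simpa only [pow_succ, pow_mul] using pow_sub_pow_mem_pow_succ hn ih

end PowSubPow

lemma iterate_sub_pow_pow_mem {R : Type*} [CommRing R] {I : Ideal R} {p : ℕ} (F : R →+* R)
    (hF : ∀ g : R, F g - g ^ p ∈ I) (e : ℕ) (g : R) : F^[e] g - g ^ p ^ e ∈ I := by
  induction e with
  | zero => simp
  | succ e ih =>
    have hpow : (F^[e] g) ^ p - (g ^ p ^ e) ^ p ∈ I :=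
      Ideal.mem_of_dvd _ (sub_dvd_pow_sub_pow _ _ p) ih
    rw [Function.iterate_succ_apply', pow_succ, pow_mul, ← sub_add_sub_cancel _ ((F^[e] g) ^ p)]
    exact I.add_mem (hF _) hpow

theorem stmt1_general (V R : Type*) [CommRing V] [IsLocalRing V]
    [CommRing R] [Algebra V R]
    (p m0 : ℕ) (hpm : (p : V) ∈ IsLocalRing.maximalIdeal V)
    (hm : IsLocalRing.maximalIdeal V ^ (m0 + 1) = ⊥)
    (F : R →+* R)
    (hF : ∀ g : R, F g - g ^ p ∈ Ideal.map (algebraMap V R) (IsLocalRing.maximalIdeal V)) :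
    ∀ (e : ℕ) (g : R), (⇑F)^[e] (g ^ p ^ m0) = g ^ p ^ (m0 + e) := by
  intro e g
  set M := Ideal.map (algebraMap V R) (IsLocalRing.maximalIdeal V)
  have hpM : (p : R) ∈ M := by simpa using Ideal.mem_map_of_mem (algebraMap V R) hpm
  have hM : M ^ (m0 + 1) = ⊥ := by rw [← Ideal.map_pow, hm, Ideal.map_bot]
  have hcong := pow_pow_sub_pow_pow_mem_pow hpM (iterate_sub_pow_pow_mem F hF e g) m0
  rw [hM, Ideal.mem_bot, sub_eq_zero] at hcong
  rw [iterate_map_pow, hcong, ← pow_mul, ← pow_add, add_comm]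

/-- If `F : R → R` lifts Frobenius and `m^(m0+1) = 0` in the artinian local base `V`,
then `F^e(g^(p^m0)) = g^(p^(m0+e))` for all `e` and `g`. -/
theorem stmt1 (V R : Type*) [CommRing V] [IsLocalRing V] [IsArtinianRing V]
    [CommRing R] [Algebra V R]
    (p m0 : ℕ) (hp : p.Prime) (hpm : (p : V) ∈ IsLocalRing.maximalIdeal V)
    (hm : IsLocalRing.maximalIdeal V ^ (m0 + 1) = ⊥)
    (F : R →+* R)
    (hF : ∀ g : R, F g - g ^ p ∈ Ideal.map (algebraMap V R) (IsLocalRing.maximalIdeal V)) :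
    ∀ (e : ℕ) (g : R), (⇑F)^[e] (g ^ p ^ m0) = g ^ p ^ (m0 + e) :=
  stmt1_general V R p m0 hpm hm F hF
end

section
/- Let V be a commutative artinian local ring with maximal ideal m of residue characteristic p, S a V-algebra, and x, y ∈ S. Then the families of ideals {(x−y)^n S}_{n≥0} and {(x^(p^e) − y^(p^e)) S}_{e≥0} are cofinal: for every e there exists n with (x−y)^n ∈ (x^(p^e) − y^(p^e))S, and for every n there exists e with x^(p^e) − y^(p^e) ∈ (x−y)^n S. -/
/-- Binomial formula when `b` squares to zero. -/
lemma aux_sq_zero_pow {R : Type*} [CommRing R] {b : R} (hb : b * b = 0) (a : R) :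
    ∀ n : ℕ, (a + b) ^ n = a ^ n + n * a ^ (n - 1) * b := by
  intro n
  induction n with
  | zero => simp
  | succ m ih =>
    cases m with
    | zero => push_cast; ring
    | succ k =>
      have h : (a + b) ^ (k + 2) = (a + b) ^ (k + 1) * (a + b) := by ring
      rw [h, ih]
      simp only [Nat.add_sub_cancel]
      push_cast
      linear_combination (((k : R) + 1) * a ^ k) * hb

/-- If `(P : S) = 0` then `(X - Y)^2 ∣ X^P - Y^P`. -/
lemma aux_sq_dvd {S : Type*} [CommRing S] {P : ℕ} (hP : (P : S) = 0) (X Y : S) :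
    (X - Y) ^ 2 ∣ X ^ P - Y ^ P := by
  set I : Ideal S := Ideal.span {(X - Y) ^ 2}
  rw [← Ideal.mem_span_singleton, ← Ideal.Quotient.eq_zero_iff_mem]
  set f := Ideal.Quotient.mk I
  have hb : f (X - Y) * f (X - Y) = 0 := by
    rw [← map_mul, Ideal.Quotient.eq_zero_iff_mem, ← sq]
    exact Ideal.subset_span rfl
  have hX : f X = f Y + f (X - Y) := by rw [← map_add]; ring_nf
  have := aux_sq_zero_pow hb (f Y) P
  have hPf : (P : S ⧸ I) = 0 := by rw [← map_natCast f, hP, map_zero]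
  calc f (X ^ P - Y ^ P) = f X ^ P - f Y ^ P := by simp [f]
    _ = 0 := by rw [hX, this, hPf]; ring

/-- Cofinality of the families of ideals `{(x-y)^n}` and `{(x^(p^e) - y^(p^e))}` in a
`V`-algebra `S`, for `V` artinian local of residue characteristic `p` with
`m^(m0+1) = 0`. -/
theorem stmt3 (V S : Type*) [CommRing V] [IsLocalRing V] [CommRing S] [Algebra V S]
    (p m0 : ℕ) (hp : p.Prime) (hpm : (p : V) ∈ IsLocalRing.maximalIdeal V)
    (hm : IsLocalRing.maximalIdeal V ^ (m0 + 1) = ⊥)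
    (x y : S) :
    (∀ e : ℕ, ∃ n : ℕ, (x - y) ^ n ∈ Ideal.span {x ^ p ^ e - y ^ p ^ e}) ∧
      (∀ n : ℕ, ∃ e : ℕ, x ^ p ^ e - y ^ p ^ e ∈ Ideal.span {(x - y) ^ n}) := by
  -- `p^(m0+1) = 0` in `S`
  have hpV : (p : V) ^ (m0 + 1) = 0 := by
    have : (p : V) ^ (m0 + 1) ∈ IsLocalRing.maximalIdeal V ^ (m0 + 1) :=
      Ideal.pow_mem_pow hpm _
    rw [hm] at this
    simpa using this
  have hpS : (p : S) ^ (m0 + 1) = 0 := by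
    have := congrArg (algebraMap V S) hpV
    simpa using this
  constructor
  · -- direction 1
    intro e
    refine ⟨p ^ e * (m0 + 1), ?_⟩
    obtain ⟨c₀, hc⟩ := exists_add_pow_prime_pow_eq hp (x - y) y e
    rw [sub_add_cancel] at hc
    set c := -((x - y) * y * c₀) with hcdef
    set z := x ^ p ^ e - y ^ p ^ e
    set I : Ideal S := Ideal.span {z}
    rw [← Ideal.Quotient.eq_zero_iff_mem]
    set f := Ideal.Quotient.mk I
    have hz : f z = 0 := Ideal.Quotient.eq_zero_iff_mem.2 (Ideal.subset_span rfl)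
    have h1 : f ((x - y) ^ p ^ e) = (p : S ⧸ I) * f c := by
      have : (x - y) ^ p ^ e = z + (p : S) * c := by
        simp only [z]; linear_combination -hc
      rw [this, map_add, map_mul, hz, zero_add, map_natCast]
    calc f ((x - y) ^ (p ^ e * (m0 + 1)))
        = (f ((x - y) ^ p ^ e)) ^ (m0 + 1) := by rw [← map_pow, ← pow_mul]
      _ = (p : S ⧸ I) ^ (m0 + 1) * f c ^ (m0 + 1) := by rw [h1, mul_pow]
      _ = 0 := by
          have : ((p : S) ^ (m0 + 1) : S ⧸ I) = f ((p : S) ^ (m0 + 1)) := by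
            simp [f]
          rw [← map_natCast f, ← map_pow, hpS, map_zero, zero_mul]
  · -- direction 2
    intro n
    have hP0 : ((p ^ (m0 + 1) : ℕ) : S) = 0 := by push_cast; exact hpS
    -- claim: (x-y)^(j+1) ∣ x^((p^(m0+1))^j) - y^((p^(m0+1))^j)
    have key : ∀ j : ℕ, (x - y) ^ (j + 1) ∣
        x ^ (p ^ (m0 + 1)) ^ j - y ^ (p ^ (m0 + 1)) ^ j := by
      intro j
      induction j with
      | zero => simp
      | succ k ih =>
        have h2 := aux_sq_dvd hP0 (x ^ (p ^ (m0 + 1)) ^ k) (y ^ (p ^ (m0 + 1)) ^ k)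
        have h3 : (x - y) ^ (k + 2) ∣ (x ^ (p ^ (m0 + 1)) ^ k - y ^ (p ^ (m0 + 1)) ^ k) ^ 2 := by
          obtain ⟨u, hu⟩ := ih
          refine ⟨u ^ 2 * (x - y) ^ k, ?_⟩
          rw [hu]; ring
        rw [pow_succ (p ^ (m0 + 1)) k, pow_mul x, pow_mul y]
        exact h3.trans h2
    refine ⟨(m0 + 1) * n, ?_⟩
    rw [Ideal.mem_span_singleton]
    have h := key n
    rw [← pow_mul] at h
    exact dvd_trans (pow_dvd_pow (x - y) (Nat.le_succ n)) h
end

section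
/- Let V be a commutative artinian local ring with maximal ideal m, and let C = C(Z_p, V) be the ring of continuous functions Z_p → V (V discrete). For α ∈ Z_p, let (0:α) = {φ ∈ C : φ(α) = 0} and (m:α) = {φ ∈ C : φ(α) ∈ m}. Then the localization of C at the maximal ideal (m:α) is naturally isomorphic to C/(0:α), which in turn is isomorphic to V via evaluation at α. -/
/-- Evaluation at `α ∈ ℤ_p` as a ring homomorphism on the ring `C(ℤ_p, V)` of
locally constant (= continuous, for discrete `V`) functions `ℤ_p → V`. -/
noncomputable def evalHom (V : Type*) [CommRing V] (p : ℕ) [Fact p.Prime] (α : ℤ_[p]) :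
    LocallyConstant ℤ_[p] V →+* V where
  toFun φ := φ α
  map_one' := rfl
  map_mul' _ _ := rfl
  map_zero' := rfl
  map_add' _ _ := rfl

lemma evalHom_surjective (V : Type*) [CommRing V] (p : ℕ) [Fact p.Prime] (α : ℤ_[p]) :
    Function.Surjective (evalHom V p α) :=
  fun v => ⟨LocallyConstant.const _ v, rfl⟩

/-- For `V` artinian local with maximal ideal `m` and `α ∈ ℤ_p`, the quotient
`C/(0:α)` and the localization of `C = C(ℤ_p,V)` at the maximal ideal
`(m:α) = {φ : φ(α) ∈ m}` are both isomorphic to `V`, via evaluation at `α`. -/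
theorem stmt9 (V : Type*) [CommRing V] [IsLocalRing V] [IsArtinianRing V]
    (p : ℕ) [Fact p.Prime] (α : ℤ_[p]) :
    (∃ eq : (LocallyConstant ℤ_[p] V ⧸ RingHom.ker (evalHom V p α)) ≃+* V,
        ∀ c : LocallyConstant ℤ_[p] V, eq (Ideal.Quotient.mk _ c) = c α) ∧
      (∃ el : Localization.AtPrime ((IsLocalRing.maximalIdeal V).comap (evalHom V p α)) ≃+* V,
        ∀ c : LocallyConstant ℤ_[p] V,
          el (algebraMap (LocallyConstant ℤ_[p] V)
            (Localization.AtPrime ((IsLocalRing.maximalIdeal V).comap (evalHom V p α))) c)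
            = c α) := by
  classical
  set f := evalHom V p α with hf
  have hsurj := evalHom_surjective V p α
  constructor
  · exact ⟨RingHom.quotientKerEquivOfSurjective hsurj, fun c => rfl⟩
  · set P := (IsLocalRing.maximalIdeal V).comap f with hP
    set L := Localization.AtPrime P
    -- elements of the prime complement map to units
    have hu : ∀ s : P.primeCompl, IsUnit (f s) := by
      rintro ⟨s, hs⟩
      have h1 : f s ∉ IsLocalRing.maximalIdeal V := fun h => hs (Ideal.mem_comap.mpr h)
      by_contra h
      exact h1 ((IsLocalRing.mem_maximalIdeal _).mpr (mem_nonunits_iff.mpr h))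
    let g : L →+* V := IsLocalization.lift (S := L) (M := P.primeCompl) hu
    have hg : ∀ c : LocallyConstant ℤ_[p] V,
        g (algebraMap (LocallyConstant ℤ_[p] V) L c) = c α := fun c =>
      IsLocalization.lift_eq hu c
    have hker : ∀ φ : LocallyConstant ℤ_[p] V, f φ = 0 →
        algebraMap (LocallyConstant ℤ_[p] V) L φ = 0 := by
      intro φ hφ
      -- characteristic function of the zero set of φ
      let χ : LocallyConstant ℤ_[p] V := φ.map (fun v => if v = 0 then 1 else 0)
      have hχα : χ α = 1 := by
        simp only [χ, LocallyConstant.map_apply]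
        simp [show φ α = 0 from hφ]
      have hχP : χ ∈ P.primeCompl := by
        simp only [P, Ideal.primeCompl, Submonoid.mem_mk, Subsemigroup.mem_mk,
          Set.mem_compl_iff, SetLike.mem_coe, Ideal.mem_comap]
        show ¬ f χ ∈ IsLocalRing.maximalIdeal V
        have : f χ = 1 := hχα
        rw [this]
        exact fun h => (IsLocalRing.maximalIdeal.isMaximal V).ne_top
          (Ideal.eq_top_of_isUnit_mem _ h isUnit_one)
      have hzero : χ * φ = 0 := by
        ext x
        simp only [LocallyConstant.coe_mul, Pi.mul_apply, LocallyConstant.coe_zero,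
          Pi.zero_apply, χ, LocallyConstant.map_apply]
        by_cases h : φ x = 0 <;> simp [h]
      have := IsLocalization.map_eq_zero_iff P.primeCompl L φ
      rw [this]
      exact ⟨⟨χ, hχP⟩, by simpa [mul_comm] using hzero⟩
    have hinj : Function.Injective g := by
      rw [injective_iff_map_eq_zero]
      intro z hz
      obtain ⟨⟨φ, s⟩, rfl⟩ := IsLocalization.mk'_surjective P.primeCompl z
      have h1 : f φ = 0 := by
        have h2 := congrArg g (IsLocalization.mk'_spec L φ s)
        rw [map_mul, hz, zero_mul] at h2
        rw [hg] at h2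
        exact h2.symm
      have h3 : algebraMap (LocallyConstant ℤ_[p] V) L φ = 0 := hker φ h1
      have h4 := IsLocalization.mk'_spec L φ s
      rw [h3] at h4
      exact (IsUnit.mul_left_eq_zero (IsLocalization.map_units L s)).mp h4
    have hsurj' : Function.Surjective g := fun v =>
      ⟨algebraMap (LocallyConstant ℤ_[p] V) L (LocallyConstant.const _ v), hg _⟩
    exact ⟨RingEquiv.ofBijective g ⟨hinj, hsurj'⟩, hg⟩
end

section
/- Let V be artinian local with maximal ideal m, C = C(Z_p, V), and M a C-module. For α, β ∈ Z_p distinct, the localization at (m:β) of the localization of M at (m:α) vanishes: (M_α)_β = 0; and (M_α)_α ≅ M_α. -/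
namespace LocalizedModule

variable {R M : Type*} [CommSemiring R] [AddCommMonoid M] [Module R M]

theorem bijective_mkLinearMap_localizedModule (S : Submonoid R) :
    Function.Bijective (mkLinearMap S (LocalizedModule S M)) := by
  have := isLocalizedModule_id S (LocalizedModule S M) (Localization S)
  rw [← IsLocalizedModule.iso_symm_comp S LinearMap.id]
  exact (IsLocalizedModule.iso S _).symm.bijective

theorem smul_eq_zero_of_mul_eq_zero {S : Submonoid R} {s t : R} (hs : s ∈ S) (hst : s * t = 0)
    (x : LocalizedModule S M) : t • x = 0 := by
  have hinj := ((Module.End.isUnit_iff _).1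
    (IsLocalizedModule.map_units (mkLinearMap S M) ⟨s, hs⟩)).injective
  apply hinj
  change s • t • x = s • 0
  rw [smul_smul, hst, zero_smul, smul_zero]

theorem subsingleton_localizedModule_of_mul_eq_zero {S T : Submonoid R} {s t : R} (hs : s ∈ S)
    (ht : t ∈ T) (hst : s * t = 0) : Subsingleton (LocalizedModule T (LocalizedModule S M)) :=
  (IsLocalizedModule.subsingleton_iff T (mkLinearMap T _)).2 fun x =>
    ⟨t, ht, smul_eq_zero_of_mul_eq_zero hs hst x⟩

end LocalizedModule

theorem LocallyConstant.exists_mul_eq_zero_of_ne {X Y : Type*} [TopologicalSpace X]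
    [TotallySeparatedSpace X] [MulZeroOneClass Y] {α β : X} (h : α ≠ β) :
    ∃ s t : LocallyConstant X Y, s α = 1 ∧ t β = 1 ∧ s * t = 0 := by
  obtain ⟨U, hU, hαU, hβU⟩ := exists_isClopen_of_totally_separated h
  refine ⟨charFn Y hU, charFn Y hU.compl, ?_, ?_, ?_⟩
  · simp [coe_charFn, hαU]
  · simp [coe_charFn, hβU]
  · ext x
    by_cases hx : x ∈ U <;> simp [coe_charFn, hx]

theorem stmt10_general (V : Type*) [CommRing V] [IsLocalRing V]
    (p : ℕ) [Fact p.Prime]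
    (M : Type*) [AddCommGroup M] [Module (LocallyConstant ℤ_[p] V) M]
    (α β : ℤ_[p]) :
    (α ≠ β → Subsingleton (LocalizedModule
        (((IsLocalRing.maximalIdeal V).comap (evalHom V p β)).primeCompl)
        (LocalizedModule
          (((IsLocalRing.maximalIdeal V).comap (evalHom V p α)).primeCompl) M))) ∧
      Function.Bijective (LocalizedModule.mkLinearMap
        (((IsLocalRing.maximalIdeal V).comap (evalHom V p α)).primeCompl)
        (LocalizedModule
          (((IsLocalRing.maximalIdeal V).comap (evalHom V p α)).primeCompl) M)) := by
  refine ⟨fun hne => ?_, LocalizedModule.bijective_mkLinearMap_localizedModule _⟩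
  obtain ⟨s, t, hs, ht, hst⟩ := LocallyConstant.exists_mul_eq_zero_of_ne (Y := V) hne
  have one_notMem : (1 : V) ∉ IsLocalRing.maximalIdeal V :=
    IsLocalRing.notMem_maximalIdeal.2 isUnit_one
  exact LocalizedModule.subsingleton_localizedModule_of_mul_eq_zero
    (show s α ∉ _ from hs ▸ one_notMem) (show t β ∉ _ from ht ▸ one_notMem) hst

/-- Stalks of a `C(ℤ_p,V)`-module: `(M_α)_β = 0` for `β ≠ α`, and the natural map
`M_α → (M_α)_α` is an isomorphism. Here `M_γ` denotes the localization of `M` at the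
maximal ideal `(m:γ) = {φ : φ(γ) ∈ m}`. -/
theorem stmt10 (V : Type*) [CommRing V] [IsLocalRing V]
    (p m0 : ℕ) [Fact p.Prime]
    (hm : IsLocalRing.maximalIdeal V ^ (m0 + 1) = ⊥)
    (M : Type*) [AddCommGroup M] [Module (LocallyConstant ℤ_[p] V) M]
    (α β : ℤ_[p]) :
    (α ≠ β → Subsingleton (LocalizedModule
        (((IsLocalRing.maximalIdeal V).comap (evalHom V p β)).primeCompl)
        (LocalizedModule
          (((IsLocalRing.maximalIdeal V).comap (evalHom V p α)).primeCompl) M))) ∧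
      Function.Bijective (LocalizedModule.mkLinearMap
        (((IsLocalRing.maximalIdeal V).comap (evalHom V p α)).primeCompl)
        (LocalizedModule
          (((IsLocalRing.maximalIdeal V).comap (evalHom V p α)).primeCompl) M)) :=
  stmt10_general V p M α β
end

section
/- Let V be artinian local with m^(m0+1) = 0, C = C(Z_p, V), and M a C-module supported at finitely many points α_1, …, α_s ∈ Z_p. Then the annihilator of M in C equals the product (a_1 : α_1)·(a_2 : α_2)⋯(a_s : α_s), where a_i ⊆ V is the annihilator in V of the stalk M_{α_i} and (a:α) = {φ ∈ C : φ(α) ∈ a}. -/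
/-- The constant-functions ring homomorphism `V → C(ℤ_p, V)`. -/
noncomputable def constHom (V : Type*) [CommRing V] (p : ℕ) [Fact p.Prime] :
    V →+* LocallyConstant ℤ_[p] V where
  toFun v := LocallyConstant.const ℤ_[p] v
  map_one' := rfl
  map_mul' _ _ := rfl
  map_zero' := rfl
  map_add' _ _ := rfl

/-!
Localizing at the prime `{φ | φ α ∈ 𝔪}` inverts the indicator function of every clopen
neighbourhood of `α`, so on the stalk at `α` every `φ` acts as the constant `φ α`; hence
`(a_α : α)` is simply the annihilator of that stalk. By compactness, an element whose image in
every stalk vanishes is killed by the indicators of finitely many clopen sets covering the space,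
so it is zero; thus `Ann M` is the intersection of the stalk annihilators, and the stalks off `s`
vanish. Two such annihilators at distinct points are comaximal, since they contain complementary
indicator functions, so the intersection is the product.
-/

open LocallyConstant

theorem LocalizedModule.smul_eq_smul_of_mul_eq {A M : Type*} [CommRing A] [AddCommGroup M]
    [Module A M] {S : Submonoid A} {s : A} (hs : s ∈ S) {a b : A} (h : s * a = s * b)
    (y : LocalizedModule S M) : a • y = b • y := by
  have hinj := ((Module.End.isUnit_iff _).mp
    (IsLocalizedModule.map_units (LocalizedModule.mkLinearMap S M) ⟨s, hs⟩)).1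
  apply hinj
  simp only [Module.algebraMap_end_apply, smul_smul, h]

theorem LocalizedModule.annihilator_le {A M : Type*} [CommRing A] [AddCommGroup M]
    [Module A M] (S : Submonoid A) :
    Module.annihilator A M ≤ Module.annihilator A (LocalizedModule S M) := by
  intro a ha
  rw [Module.mem_annihilator] at ha ⊢
  intro y
  induction y using LocalizedModule.induction_on with
  | h m s => rw [LocalizedModule.smul'_mk, ha, LocalizedModule.zero_mk]

namespace LocallyConstant

variable {X R : Type*} [TopologicalSpace X] [CommRing R]

theorem charFn_mul_eq_charFn_mul_of_eqOn {U : Set X} (hU : IsClopen U)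
    {f g : LocallyConstant X R} (h : Set.EqOn f g U) :
    charFn R hU * f = charFn R hU * g := by
  ext x
  by_cases hx : x ∈ U
  · simp [h hx]
  · simp [coe_charFn, hx]

section Stalk

variable (R) [IsLocalRing R]

def stalkSubmonoid (x : X) : Submonoid (LocallyConstant X R) :=
  ((IsLocalRing.maximalIdeal R).comap (evalRingHom x)).primeCompl

variable {R}

theorem mem_stalkSubmonoid {x : X} {u : LocallyConstant X R} :
    u ∈ stalkSubmonoid R x ↔ IsUnit (u x) :=
  IsLocalRing.notMem_maximalIdeal

variable {M : Type*} [AddCommGroup M] [Module (LocallyConstant X R) M]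

variable (R M) in
abbrev stalk (x : X) : Type _ :=
  LocalizedModule (stalkSubmonoid R x) M

theorem smul_stalk_eq_const_smul (φ : LocallyConstant X R) (x : X)
    (y : stalk R M x) : φ • y = const X (φ x) • y := by
  have hfib := φ.isLocallyConstant.isClopen_fiber (φ x)
  refine LocalizedModule.smul_eq_smul_of_mul_eq (s := charFn R hfib) ?_
    (charFn_mul_eq_charFn_mul_of_eqOn hfib (g := const X (φ x)) fun z hz => hz) y
  rw [mem_stalkSubmonoid, (charFn_eq_one R x hfib).mpr rfl]
  exact isUnit_one

theorem comap_evalRingHom_comap_constRingHom_annihilator_stalk (x : X) :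
    ((Module.annihilator (LocallyConstant X R) (stalk R M x)).comap
      constRingHom).comap (evalRingHom x) =
      Module.annihilator (LocallyConstant X R) (stalk R M x) := by
  ext φ
  simp only [Ideal.mem_comap, Module.mem_annihilator, evalRingHom_apply, constRingHom_apply,
    smul_stalk_eq_const_smul φ x]

theorem mem_annihilator_stalk_of_apply_eq_zero {x : X} {φ : LocallyConstant X R} (h : φ x = 0) :
    φ ∈ Module.annihilator (LocallyConstant X R) (stalk R M x) := by
  rw [Module.mem_annihilator]
  intro y
  rw [smul_stalk_eq_const_smul, h]
  exact zero_smul _ y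

theorem exists_charFn_smul_eq_zero_of_mk_eq_zero {x : X} {y : M}
    (h : LocalizedModule.mk y (1 : stalkSubmonoid R x) = 0) :
    ∃ U : Set X, ∃ hU : IsClopen U, x ∈ U ∧ charFn R hU • y = 0 := by
  rw [← LocalizedModule.zero_mk 1, LocalizedModule.mk_eq] at h
  obtain ⟨⟨u, hu⟩, huy⟩ := h
  simp only [one_smul, smul_zero, Submonoid.mk_smul] at huy
  have hfib := u.isLocallyConstant.isClopen_fiber (u x)
  refine ⟨_, hfib, rfl, ?_⟩
  have hunit : IsUnit (const X (u x)) := (mem_stalkSubmonoid.mp hu).map constRingHom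
  rw [← hunit.smul_eq_zero, smul_smul, mul_comm,
    ← charFn_mul_eq_charFn_mul_of_eqOn hfib (f := u) (g := const X (u x)) fun z hz => hz,
    mul_smul, huy, smul_zero]

theorem eq_zero_of_charFn_smul_eq_zero [CompactSpace X] {N : Type*} [AddCommGroup N]
    [Module (LocallyConstant X R) N] (y : N) (U : X → Set X) (hU : ∀ x, IsClopen (U x))
    (hmem : ∀ x, x ∈ U x) (hy : ∀ x, charFn R (hU x) • y = 0) : y = 0 := by
  classical
  obtain ⟨t, ht⟩ := isCompact_univ.elim_finite_subcover U (fun x => (hU x).isOpen)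
    fun z _ => Set.mem_iUnion.2 ⟨z, hmem z⟩
  have hprod : ∏ x ∈ t, (1 - charFn R (hU x)) = 0 := by
    ext z
    obtain ⟨x, hx, hzx⟩ := Set.mem_iUnion₂.1 (ht (Set.mem_univ z))
    rw [← evalRingHom_apply, map_prod]
    refine Finset.prod_eq_zero hx ?_
    simp only [evalRingHom_apply, coe_sub, coe_one, Pi.sub_apply, Pi.one_apply,
      (charFn_eq_one R z (hU x)).mpr hzx, sub_self]
  have hfix : (∏ x ∈ t, (1 - charFn R (hU x))) • y = y :=
    Finset.prod_induction _ (fun a => a • y = y) (fun a b ha hb => by rw [mul_smul, hb, ha])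
      (one_smul _ y) fun x _ => by rw [sub_smul, one_smul, hy, sub_zero]
  rw [← hfix, hprod, zero_smul]

theorem eq_zero_of_forall_mk_eq_zero [CompactSpace X] (y : M)
    (h : ∀ x : X, LocalizedModule.mk y (1 : stalkSubmonoid R x) = 0) : y = 0 := by
  choose U hU hmem hy using fun x => exists_charFn_smul_eq_zero_of_mk_eq_zero (h x)
  exact eq_zero_of_charFn_smul_eq_zero y U hU hmem hy

theorem annihilator_eq_iInf_annihilator_stalk [CompactSpace X] :
    Module.annihilator (LocallyConstant X R) M =
      ⨅ x : X, Module.annihilator (LocallyConstant X R) (stalk R M x) := by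
  refine le_antisymm (le_iInf fun x => LocalizedModule.annihilator_le _) fun φ hφ => ?_
  rw [Module.mem_annihilator]
  intro y
  refine eq_zero_of_forall_mk_eq_zero (X := X) (R := R) _ fun x => ?_
  rw [← LocalizedModule.smul'_mk]
  exact Module.mem_annihilator.mp (Ideal.mem_iInf.mp hφ x) _

theorem isCoprime_annihilator_stalk [TotallySeparatedSpace X] {x y : X} (hxy : x ≠ y) :
    IsCoprime (Module.annihilator (LocallyConstant X R) (stalk R M x))
      (Module.annihilator (LocallyConstant X R) (stalk R M y)) := by
  obtain ⟨U, hU, hyU, hxU⟩ := exists_isClopen_of_totally_separated hxy.symm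
  refine Ideal.isCoprime_iff_exists.mpr
    ⟨charFn R hU, ?_, 1 - charFn R hU, ?_, add_sub_cancel _ _⟩
  · exact mem_annihilator_stalk_of_apply_eq_zero ((charFn_eq_zero R x hU).mpr hxU)
  · refine mem_annihilator_stalk_of_apply_eq_zero ?_
    simp only [coe_sub, coe_one, Pi.sub_apply, Pi.one_apply, (charFn_eq_one R y hU).mpr hyU,
      sub_self]

theorem annihilator_eq_prod_annihilator_stalk [CompactSpace X] [TotallySeparatedSpace X]
    (s : Finset X) (hs : ∀ x ∉ s, Subsingleton (stalk R M x)) :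
    Module.annihilator (LocallyConstant X R) M =
      ∏ x ∈ s, Module.annihilator (LocallyConstant X R) (stalk R M x) := by
  rw [Ideal.prod_eq_iInf_of_pairwise_isCoprime fun x _ y _ hxy => isCoprime_annihilator_stalk hxy,
    annihilator_eq_iInf_annihilator_stalk]
  refine le_antisymm (le_iInf₂ fun x _ => iInf_le _ x) (le_iInf fun x => ?_)
  by_cases hx : x ∈ s
  · exact iInf₂_le x hx
  · rw [(Module.annihilator_eq_top_iff (R := LocallyConstant X R)).mpr (hs x hx)]
    exact le_top

end Stalk

end LocallyConstant

theorem stmt12_general (V : Type*) [CommRing V] [IsLocalRing V]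
    (p : ℕ) [Fact p.Prime]
    (M : Type*) [AddCommGroup M] [Module (LocallyConstant ℤ_[p] V) M]
    (s : Finset ℤ_[p])
    (hs : ∀ α : ℤ_[p], α ∉ s → Subsingleton (LocalizedModule
      (((IsLocalRing.maximalIdeal V).comap (evalHom V p α)).primeCompl) M)) :
    Module.annihilator (LocallyConstant ℤ_[p] V) M =
      ∏ α ∈ s, Ideal.comap (evalHom V p α)
        (Ideal.comap (constHom V p)
          (Module.annihilator (LocallyConstant ℤ_[p] V)
            (LocalizedModule
              (((IsLocalRing.maximalIdeal V).comap (evalHom V p α)).primeCompl) M))) := by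
  change _ = ∏ α ∈ s, ((Module.annihilator _ (stalk V M α)).comap constRingHom).comap
    (evalRingHom α)
  simp_rw [comap_evalRingHom_comap_constRingHom_annihilator_stalk]
  exact annihilator_eq_prod_annihilator_stalk s hs

/-- If a `C(ℤ_p,V)`-module `M` is supported at the finitely many points of `s`, then
`Ann_C(M) = ∏_{α ∈ s} (a_α : α)`, where `a_α ⊆ V` is the annihilator of the stalk `M_α`
over `V` (the `V`-action being through constant functions), and
`(a : α) = {φ : φ(α) ∈ a}` is the preimage of `a` under evaluation at `α`. -/
theorem stmt12 (V : Type*) [CommRing V] [IsLocalRing V]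
    (p m0 : ℕ) [Fact p.Prime]
    (hm : IsLocalRing.maximalIdeal V ^ (m0 + 1) = ⊥)
    (M : Type*) [AddCommGroup M] [Module (LocallyConstant ℤ_[p] V) M]
    (s : Finset ℤ_[p])
    (hs : ∀ α : ℤ_[p], α ∉ s → Subsingleton (LocalizedModule
      (((IsLocalRing.maximalIdeal V).comap (evalHom V p α)).primeCompl) M)) :
    Module.annihilator (LocallyConstant ℤ_[p] V) M =
      ∏ α ∈ s, Ideal.comap (evalHom V p α)
        (Ideal.comap (constHom V p)
          (Module.annihilator (LocallyConstant ℤ_[p] V)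
            (LocalizedModule
              (((IsLocalRing.maximalIdeal V).comap (evalHom V p α)).primeCompl) M))) :=
  stmt12_general V p M s hs
end

section
/- For an ideal a ⊆ V, a p-adic integer α ∈ Z_p, and an integer k ≥ 0, one has (a : α)^k = (a^k : α) in C(Z_p, V), where (a:α) = {φ ∈ C(Z_p,V) : φ(α) ∈ a}. In particular, if m^(m0+1) = 0 in V then (m:α)^(m0+1) = (0:α). -/
lemma exists_idem_evalHom (V : Type*) [CommRing V] (p : ℕ) [Fact p.Prime] (α : ℤ_[p])
    (φ : LocallyConstant ℤ_[p] V) (hφ : φ α = 0) :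
    ∃ e : LocallyConstant ℤ_[p] V, e α = 0 ∧ φ * e = φ := by
  classical
  refine ⟨φ.map (fun v => if v = 0 then (0 : V) else 1), ?_, ?_⟩
  · simp [LocallyConstant.map_apply, hφ]
  · ext x
    simp only [LocallyConstant.coe_mul, Pi.mul_apply, LocallyConstant.map_apply,
      Function.comp_apply]
    split <;> simp [*]

lemma ker_le_pow (V : Type*) [CommRing V] (p : ℕ) [Fact p.Prime] (α : ℤ_[p])
    (J : Ideal (LocallyConstant ℤ_[p] V)) (hJ : RingHom.ker (evalHom V p α) ≤ J) (k : ℕ) :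
    RingHom.ker (evalHom V p α) ≤ J ^ k := by
  induction k with
  | zero => simp
  | succ n ih =>
    intro φ hφ
    obtain ⟨e, he0, hmul⟩ := exists_idem_evalHom V p α φ hφ
    rw [← hmul, pow_succ]
    exact Ideal.mul_mem_mul (ih hφ) (hJ he0)

/-- `(a : α)^k = (a^k : α)` in `C(ℤ_p, V)`, where `(a : α)` is the preimage of the
ideal `a ⊆ V` under evaluation at `α`; in particular, if `m^(m0+1) = 0` then
`(m : α)^(m0+1) = (0 : α)`. -/
theorem stmt13 (V : Type*) [CommRing V] [IsLocalRing V]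
    (p : ℕ) [Fact p.Prime] (a : Ideal V) (α : ℤ_[p]) (k m0 : ℕ)
    (hm : IsLocalRing.maximalIdeal V ^ (m0 + 1) = ⊥) :
    (Ideal.comap (evalHom V p α) a) ^ k = Ideal.comap (evalHom V p α) (a ^ k) ∧
      (Ideal.comap (evalHom V p α) (IsLocalRing.maximalIdeal V)) ^ (m0 + 1) =
        RingHom.ker (evalHom V p α) := by
  have hsurj := evalHom_surjective V p α
  have main : ∀ (b : Ideal V) (n : ℕ),
      (Ideal.comap (evalHom V p α) b) ^ n = Ideal.comap (evalHom V p α) (b ^ n) := by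
    intro b n
    have hb : Ideal.map (evalHom V p α) (Ideal.comap (evalHom V p α) b) = b :=
      Ideal.map_comap_of_surjective _ hsurj b
    have h1 : b ^ n = Ideal.map (evalHom V p α) ((Ideal.comap (evalHom V p α) b) ^ n) := by
      rw [Ideal.map_pow, hb]
    rw [h1, Ideal.comap_map_of_surjective _ hsurj]
    have hker : RingHom.ker (evalHom V p α) ≤ (Ideal.comap (evalHom V p α) b) ^ n := by
      apply ker_le_pow
      intro x hx
      simp only [Ideal.mem_comap]
      rw [RingHom.mem_ker] at hx
      rw [hx]; exact b.zero_mem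
    rw [← RingHom.ker_eq_comap_bot]
    exact (sup_eq_left.mpr hker).symm
  refine ⟨main a k, ?_⟩
  rw [main _ (m0 + 1), hm]
  rfl
end

section
/- Let V be a commutative ring, R = V[x_1,…,x_n], and F : R → R the V-semilinear ring endomorphism with F(x_i) = x_i^p (and F acting on V by a given automorphism). Then for every e ≥ 0, R is free as a module over itself via F^e, with basis the monomials x_1^{a_1}⋯x_n^{a_n} with 0 ≤ a_i < p^e. -/
open MvPolynomial


lemma stmt18_Fmon {V : Type*} [CommRing V] {n p : ℕ} (σ : V ≃+* V)
    (d : Fin n →₀ ℕ) (v : V) :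
    eval₂Hom ((C : V →+* MvPolynomial (Fin n) V).comp (σ : V →+* V)) (fun i => X i ^ p)
      (monomial d v) = monomial (p • d) (σ v) := by
  rw [eval₂Hom_monomial, monomial_eq]
  have hd : p • d = Finsupp.mapRange (p * ·) (mul_zero p) d := by
    ext i; simp [mul_comm]
  rw [hd, Finsupp.prod_mapRange_index (fun i => pow_zero _)]
  simp only [RingHom.coe_comp, Function.comp_apply, RingHom.coe_coe]
  congr 1
  exact Finsupp.prod_congr fun i _ => by rw [pow_mul]

lemma stmt18_Femon {V : Type*} [CommRing V] {n p : ℕ} (σ : V ≃+* V)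
    (F : MvPolynomial (Fin n) V →+* MvPolynomial (Fin n) V)
    (hF : F = eval₂Hom ((C : V →+* MvPolynomial (Fin n) V).comp (σ : V →+* V))
      fun i => X i ^ p) (e : ℕ)
    (d : Fin n →₀ ℕ) (v : V) :
    (⇑F)^[e] (monomial d v) = monomial (p ^ e • d) ((σ ^ e) v) := by
  induction e with
  | zero => simp
  | succ e ih =>
    rw [Function.iterate_succ_apply', ih, hF, stmt18_Fmon, smul_smul, ← pow_succ']
    congr 1
    rw [pow_succ']
    rfl

lemma stmt18_expand {V : Type*} [CommRing V] {n p : ℕ} (σ : V ≃+* V)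
    (F : MvPolynomial (Fin n) V →+* MvPolynomial (Fin n) V)
    (hF : F = eval₂Hom ((C : V →+* MvPolynomial (Fin n) V).comp (σ : V →+* V))
      fun i => X i ^ p) (e : ℕ) (g : MvPolynomial (Fin n) V) :
    (⇑F)^[e] g = ∑ d ∈ g.support, monomial (p ^ e • d) ((σ ^ e) (coeff d g)) := by
  conv_lhs => rw [g.as_sum]
  rw [← RingHom.coe_pow, map_sum]
  exact Finset.sum_congr rfl fun d _ => by
    rw [RingHom.coe_pow]; exact stmt18_Femon σ F hF e d (coeff d g)

lemma stmt18_coeff_Fe {V : Type*} [CommRing V] {n p : ℕ} (hp : 0 < p) (σ : V ≃+* V)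
    (F : MvPolynomial (Fin n) V →+* MvPolynomial (Fin n) V)
    (hF : F = eval₂Hom ((C : V →+* MvPolynomial (Fin n) V).comp (σ : V →+* V))
      fun i => X i ^ p) (e : ℕ) (g : MvPolynomial (Fin n) V) (c : Fin n →₀ ℕ) :
    coeff (p ^ e • c) ((⇑F)^[e] g) = (σ ^ e) (coeff c g) := by
  classical
  rw [stmt18_expand σ F hF, coeff_sum]
  simp only [coeff_monomial]
  have hinj : ∀ d : Fin n →₀ ℕ, p ^ e • d = p ^ e • c ↔ d = c := by
    intro d
    constructor
    · intro hdc
      ext i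
      have := congrArg (fun f : Fin n →₀ ℕ => f i) hdc
      simp only [Finsupp.smul_apply, smul_eq_mul] at this
      exact Nat.eq_of_mul_eq_mul_left (pow_pos hp e) this
    · rintro rfl; rfl
  rw [Finset.sum_congr rfl fun d _ => if_congr (hinj d) rfl rfl, Finset.sum_ite_eq']
  by_cases hc : c ∈ g.support
  · simp [hc]
  · simp [hc, MvPolynomial.notMem_support_iff.mp hc]

lemma stmt18_coeff_Fe_zero {V : Type*} [CommRing V] {n p : ℕ} (σ : V ≃+* V)
    (F : MvPolynomial (Fin n) V →+* MvPolynomial (Fin n) V)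
    (hF : F = eval₂Hom ((C : V →+* MvPolynomial (Fin n) V).comp (σ : V →+* V))
      fun i => X i ^ p) (e : ℕ) (g : MvPolynomial (Fin n) V) (c : Fin n →₀ ℕ)
    (i : Fin n) (hi : ¬ p ^ e ∣ c i) :
    coeff c ((⇑F)^[e] g) = 0 := by
  classical
  rw [stmt18_expand σ F hF, coeff_sum]
  refine Finset.sum_eq_zero fun d _ => ?_
  rw [coeff_monomial, if_neg]
  intro hdc
  apply hi
  rw [← hdc]
  exact ⟨d i, rfl⟩

lemma stmt18_prodX {V : Type*} [CommRing V] {n : ℕ} (f : Fin n → ℕ) :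
    ∏ i, (X i : MvPolynomial (Fin n) V) ^ f i
      = monomial (Finsupp.equivFunOnFinite.symm f) 1 := by
  rw [monomial_eq, C_1, one_mul, Finsupp.prod_pow]
  simp

lemma stmt18_key {V : Type*} [CommRing V] {n p : ℕ} (hp : 0 < p) (σ : V ≃+* V)
    (F : MvPolynomial (Fin n) V →+* MvPolynomial (Fin n) V)
    (hF : F = eval₂Hom ((C : V →+* MvPolynomial (Fin n) V).comp (σ : V →+* V))
      fun i => X i ^ p) (e : ℕ)
    (g : (Fin n → Fin (p ^ e)) → MvPolynomial (Fin n) V) (b : Fin n →₀ ℕ) :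
    coeff b (∑ a : Fin n → Fin (p ^ e), (⇑F)^[e] (g a) * ∏ i, X i ^ ((a i : ℕ)))
      = (σ ^ e) (coeff (b.mapRange (· / p ^ e) (Nat.zero_div _))
          (g fun i => ⟨b i % p ^ e, Nat.mod_lt _ (pow_pos hp e)⟩)) := by
  classical
  have hN : 0 < p ^ e := pow_pos hp e
  rw [coeff_sum]
  rw [Finset.sum_eq_single_of_mem (fun i => (⟨b i % p ^ e, Nat.mod_lt _ hN⟩ : Fin (p ^ e)))
    (Finset.mem_univ _) ?side]
  · rw [stmt18_prodX, coeff_mul_monomial']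
    have hle : Finsupp.equivFunOnFinite.symm (fun i => (b i % p ^ e)) ≤ b := by
      rw [Finsupp.le_def]
      intro i
      simp only [Finsupp.coe_equivFunOnFinite_symm]
      exact Nat.mod_le _ _
    rw [if_pos hle, mul_one]
    have hsub : b - Finsupp.equivFunOnFinite.symm (fun i => (b i % p ^ e))
        = p ^ e • b.mapRange (· / p ^ e) (Nat.zero_div _) := by
      ext i
      simp only [Finsupp.tsub_apply, Finsupp.coe_equivFunOnFinite_symm,
        Finsupp.smul_apply, Finsupp.mapRange_apply, smul_eq_mul]
      have := Nat.div_add_mod (b i) (p ^ e)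
      omega
    rw [hsub, stmt18_coeff_Fe hp σ F hF]
  case side =>
    intro a _ ha
    rw [stmt18_prodX, coeff_mul_monomial']
    split_ifs with hle
    · rw [mul_one]
      have : ∃ i, (a i : ℕ) ≠ b i % p ^ e := by
        by_contra hc
        push_neg at hc
        exact ha (funext fun i => Fin.ext (hc i))
      obtain ⟨i, hi⟩ := this
      apply stmt18_coeff_Fe_zero σ F hF e _ _ i
      rintro ⟨k, hk⟩
      apply hi
      rw [Finsupp.le_def] at hle
      have h1 := hle i
      simp only [Finsupp.coe_equivFunOnFinite_symm] at h1
      rw [Finsupp.tsub_apply] at hk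
      simp only [Finsupp.coe_equivFunOnFinite_symm] at hk
      have h2 : (a i : ℕ) < p ^ e := (a i).isLt
      have h3 : b i = p ^ e * k + a i := by omega
      rw [h3, Nat.mul_add_mod, Nat.mod_eq_of_lt h2]
    · rfl

/-- For `R = V[x_1,…,x_n]` and the `V`-semilinear lift of Frobenius `F` (acting on `V` by
an automorphism `σ` and sending `x_i ↦ x_i^p`), `R` is free over itself via `F^e` with
basis the monomials `x^a`, `0 ≤ a_i < p^e`: every `h` is uniquely
`h = Σ_a F^e(g_a) x^a`. -/
theorem stmt18 (V : Type*) [CommRing V] (n p : ℕ) (hp : p.Prime)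
    (σ : V ≃+* V)
    (F : MvPolynomial (Fin n) V →+* MvPolynomial (Fin n) V)
    (hF : F = eval₂Hom ((C : V →+* MvPolynomial (Fin n) V).comp (σ : V →+* V))
      fun i => X i ^ p)
    (e : ℕ) (h : MvPolynomial (Fin n) V) :
    ∃! g : (Fin n → Fin (p ^ e)) → MvPolynomial (Fin n) V,
      h = ∑ a : Fin n → Fin (p ^ e), (⇑F)^[e] (g a) * ∏ i, X i ^ ((a i : ℕ)) := by
  classical
  have hN : 0 < p ^ e := pow_pos hp.pos e
  set Q : (Fin n →₀ ℕ) → (Fin n →₀ ℕ) :=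
    fun b => b.mapRange (· / p ^ e) (Nat.zero_div _) with hQ
  set Rr : (Fin n →₀ ℕ) → (Fin n → Fin (p ^ e)) :=
    fun b i => ⟨b i % p ^ e, Nat.mod_lt _ hN⟩ with hRr
  have key : ∀ (g : (Fin n → Fin (p ^ e)) → MvPolynomial (Fin n) V) (b : Fin n →₀ ℕ),
      coeff b (∑ a : Fin n → Fin (p ^ e), (⇑F)^[e] (g a) * ∏ i, X i ^ ((a i : ℕ)))
        = (σ ^ e) (coeff (Q b) (g (Rr b))) :=
    fun g b => stmt18_key hp.pos σ F hF e g b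
  have hembQ : ∀ (d : Fin n →₀ ℕ) (a : Fin n → Fin (p ^ e)),
      Q (p ^ e • d + Finsupp.equivFunOnFinite.symm fun i => (a i : ℕ)) = d := by
    intro d a
    ext i
    simp only [hQ, Finsupp.mapRange_apply, Finsupp.add_apply, Finsupp.smul_apply,
      smul_eq_mul, Finsupp.coe_equivFunOnFinite_symm]
    rw [Nat.mul_add_div hN, Nat.div_eq_of_lt (a i).isLt, add_zero]
  have hembR : ∀ (d : Fin n →₀ ℕ) (a : Fin n → Fin (p ^ e)),
      Rr (p ^ e • d + Finsupp.equivFunOnFinite.symm fun i => (a i : ℕ)) = a := by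
    intro d a
    funext i
    apply Fin.ext
    simp only [hRr, Finsupp.add_apply, Finsupp.smul_apply, smul_eq_mul,
      Finsupp.coe_equivFunOnFinite_symm]
    rw [Nat.mul_add_mod, Nat.mod_eq_of_lt (a i).isLt]
  have hbij : ∀ b b' : Fin n →₀ ℕ, Q b = Q b' → Rr b = Rr b' → b = b' := by
    intro b b' hq hr
    ext i
    have h1 : b i / p ^ e = b' i / p ^ e := by
      have := congrArg (fun f : Fin n →₀ ℕ => f i) hq
      simpa [hQ] using this
    have h2 : b i % p ^ e = b' i % p ^ e := by
      have := congrArg (fun f : Fin n → Fin (p ^ e) => (f i : ℕ)) hr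
      simpa [hRr] using this
    have h3 := Nat.div_add_mod (b i) (p ^ e)
    have h4 := Nat.div_add_mod (b' i) (p ^ e)
    rw [h1, h2] at h3
    omega
  set g₀ : (Fin n → Fin (p ^ e)) → MvPolynomial (Fin n) V := fun a =>
    ∑ b ∈ h.support, if Rr b = a then monomial (Q b) ((σ ^ e).symm (coeff b h)) else 0
    with hg₀def
  have hcoeffg₀ : ∀ b : Fin n →₀ ℕ,
      coeff (Q b) (g₀ (Rr b)) = if b ∈ h.support then (σ ^ e).symm (coeff b h) else 0 := by
    intro b
    rw [hg₀def]
    simp only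
    rw [coeff_sum]
    rw [Finset.sum_congr rfl (fun b' _ => ?_),
      Finset.sum_ite_eq' h.support b (fun b' => (σ ^ e).symm (coeff b' h))]
    by_cases h1 : b' = b
    · subst h1; simp [coeff_monomial]
    · rw [if_neg h1]
      split_ifs with h2
      · rw [coeff_monomial, if_neg (fun h3 => h1 (hbij b' b h3 h2))]
      · exact coeff_zero _
  have hg₀ : h = ∑ a : Fin n → Fin (p ^ e), (⇑F)^[e] (g₀ a) * ∏ i, X i ^ ((a i : ℕ)) := by
    apply MvPolynomial.ext
    intro b
    rw [key, hcoeffg₀]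
    by_cases hb : b ∈ h.support
    · rw [if_pos hb, RingEquiv.apply_symm_apply]
    · rw [if_neg hb, map_zero, MvPolynomial.notMem_support_iff.mp hb]
  refine ⟨g₀, hg₀, ?_⟩
  intro g hg
  funext a
  apply MvPolynomial.ext
  intro d
  have hb1 := key g (p ^ e • d + Finsupp.equivFunOnFinite.symm fun i => (a i : ℕ))
  have hb2 := key g₀ (p ^ e • d + Finsupp.equivFunOnFinite.symm fun i => (a i : ℕ))
  rw [hembQ, hembR] at hb1 hb2
  rw [← hg] at hb1
  rw [← hg₀] at hb2
  exact (σ ^ e).injective (hb1.symm.trans hb2)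
end
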